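/- For almost surely terminating loops, the weakest pre-expectation and the weakest liberal pre-expectation coincide on post-expectations bounded by one: if ∑' τ, W σ τ = 1 for every σ (the loop is AST) and the post-expectation E : Σ → ℝ≥0∞ satisfies E ≤ 1 pointwise, then lfp Φ_E = wlpe E, where (wlpe E) σ := (∑' τ, W σ τ * E τ) + (1 - ∑' τ, W σ τ). Consequently every expectation I ≤ 1 with I = Φ_E I equals lfp Φ_E. -/

import Mathlib

/-!
The least fixed point of `Φ_E` is the weakest pre-expectation `wpe E σ = ∑' τ, W σ τ * E τ`:
the `n`-step expectations `∑' τ, μ_n σ τ * E τ` are the Kleene iterates `Φ_E^[n+1] ⊥`, and `Φ_E`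
commutes with suprema of increasing chains. Under almost sure termination each `W σ` is a
probability distribution, so the liberal term `1 - ∑' τ, W σ τ` vanishes and
`wpe (1 - E) = 1 - wpe E`. If `I ≤ 1` is a fixed point of `Φ_E`, then `1 - I` is a fixed point
of `Φ_{1-E}`, whence `1 - wpe E = wpe (1 - E) ≤ 1 - I`, i.e. `I ≤ wpe E = lfp Φ_E`.
-/

open ENNReal

/-- The characteristic function of the loop `while G do body` with respect to
post-expectation `E`. -/
noncomputable def Phi {S : Type*} (G : S → Prop) [DecidablePred G] (body : S → PMF S)
    (E : S → ℝ≥0∞) (X : S → ℝ≥0∞) : S → ℝ≥0∞ :=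
  fun σ => if G σ then ∑' τ, body σ τ * X τ else E σ

theorem Phi_monotone {S : Type*} (G : S → Prop) [DecidablePred G] (body : S → PMF S)
    (E : S → ℝ≥0∞) : Monotone (Phi G body E) := by
  intro X Y hXY σ
  simp only [Phi]
  split
  · exact ENNReal.tsum_le_tsum fun τ => by gcongr <;> exact hXY τ
  · exact le_rfl

/-- The characteristic function, bundled as a monotone map on the complete
lattice of expectations. -/
noncomputable def PhiHom {S : Type*} (G : S → Prop) [DecidablePred G] (body : S → PMF S)
    (E : S → ℝ≥0∞) : (S → ℝ≥0∞) →o (S → ℝ≥0∞) :=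
  ⟨Phi G body E, Phi_monotone G body E⟩

/-- The stopped `n`-step kernels of the loop `while G do body`. -/
noncomputable def mu {S : Type*} (G : S → Prop) [DecidablePred G] [DecidableEq S]
    (body : S → PMF S) : ℕ → S → S → ℝ≥0∞
  | 0 => fun σ τ => if ¬ G σ ∧ τ = σ then 1 else 0
  | n + 1 => fun σ =>
      if G σ then (fun τ => ∑' σ', body σ σ' * mu G body n σ' τ) else mu G body 0 σ

/-- The loop's output sub-distribution. -/
noncomputable def W {S : Type*} (G : S → Prop) [DecidablePred G] [DecidableEq S]
    (body : S → PMF S) (σ τ : S) : ℝ≥0∞ :=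
  ⨆ n, mu G body n σ τ

/-- The weakest liberal pre-expectation of the loop. -/
noncomputable def wlpe {S : Type*} (G : S → Prop) [DecidablePred G] [DecidableEq S]
    (body : S → PMF S) (E : S → ℝ≥0∞) : S → ℝ≥0∞ :=
  fun σ => (∑' τ, W G body σ τ * E τ) + (1 - ∑' τ, W G body σ τ)

namespace ENNReal

theorem tsum_iSup_of_monotone {ι α : Type*} [Preorder ι] [IsDirectedOrder ι]
    {f : ι → α → ℝ≥0∞} (hf : Monotone f) :
    ∑' a, ⨆ i, f i a = ⨆ i, ∑' a, f i a := by
  simp_rw [ENNReal.tsum_eq_iSup_sum]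
  rw [iSup_comm]
  exact iSup_congr fun s => finsetSum_iSup_of_monotone fun a _ _ hij => hf hij a

theorem tsum_tsum_mul_mul_assoc {α β : Type*} (w : α → ℝ≥0∞) (k : α → β → ℝ≥0∞)
    (f : β → ℝ≥0∞) :
    ∑' b, (∑' a, w a * k a b) * f b = ∑' a, w a * ∑' b, k a b * f b := by
  simp_rw [← ENNReal.tsum_mul_right, ← ENNReal.tsum_mul_left, mul_assoc]
  exact ENNReal.tsum_comm

theorem tsum_mul_one_sub {α : Type*} {w f : α → ℝ≥0∞} (hw : ∑' a, w a ≠ ∞) (hf : f ≤ 1) :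
    ∑' a, w a * (1 - f a) = ∑' a, w a - ∑' a, w a * f a := by
  have hwf : ∑' a, w a * f a ≠ ∞ :=
    ne_top_of_le_ne_top hw (ENNReal.tsum_le_tsum fun a => mul_le_of_le_one_right' (hf a))
  refine ENNReal.eq_sub_of_add_eq hwf ?_
  rw [← ENNReal.tsum_add]
  exact tsum_congr fun a => by rw [← mul_add, tsub_add_cancel_of_le (show f a ≤ 1 from hf a), mul_one]

end ENNReal

noncomputable def wpe {S : Type*} [DecidableEq S] (G : S → Prop) [DecidablePred G]
    (body : S → PMF S) (E : S → ℝ≥0∞) : S → ℝ≥0∞ :=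
  fun σ => ∑' τ, W G body σ τ * E τ

noncomputable def wpeApprox {S : Type*} [DecidableEq S] (G : S → Prop) [DecidablePred G]
    (body : S → PMF S) (E : S → ℝ≥0∞) (n : ℕ) : S → ℝ≥0∞ :=
  fun σ => ∑' τ, mu G body n σ τ * E τ

section Loop

variable {S : Type*} {G : S → Prop} [DecidablePred G] {body : S → PMF S}

theorem Phi_iSup_of_monotone (E : S → ℝ≥0∞) {X : ℕ → S → ℝ≥0∞} (hX : Monotone X) :
    Phi G body E (⨆ n, X n) = ⨆ n, Phi G body E (X n) := by
  funext σ
  by_cases h : G σ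
  · simp only [Phi, h, if_true, iSup_apply, ENNReal.mul_iSup]
    exact ENNReal.tsum_iSup_of_monotone fun _ _ hmn τ => mul_le_mul_right (hX hmn τ) _
  · simp only [Phi, h, if_false, iSup_apply, iSup_const]

theorem Phi_one_sub {E I : S → ℝ≥0∞} (hI : I ≤ 1) (hfix : Phi G body E I = I) :
    Phi G body (1 - E) (1 - I) = 1 - I := by
  funext σ
  have hIσ := congrFun hfix σ
  by_cases h : G σ
  · simp only [Phi, h, if_true, Pi.sub_apply, Pi.one_apply] at hIσ ⊢
    rw [ENNReal.tsum_mul_one_sub (by simp) hI, PMF.tsum_coe, hIσ]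
  · simp only [Phi, h, if_false, Pi.sub_apply, Pi.one_apply] at hIσ ⊢
    rw [hIσ]

variable [DecidableEq S]

theorem mu_succ_of_guard {σ : S} (h : G σ) (n : ℕ) :
    mu G body (n + 1) σ = fun τ => ∑' σ', body σ σ' * mu G body n σ' τ := by
  simp only [mu, h, if_true]

theorem mu_monotone : Monotone (mu G body) := by
  refine monotone_nat_of_le_succ fun n => ?_
  induction n with
  | zero =>
    intro σ τ
    by_cases h : G σ <;> simp [mu, h]
  | succ n ih =>
    intro σ τ
    by_cases h : G σ
    · rw [mu_succ_of_guard h, mu_succ_of_guard h]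
      exact ENNReal.tsum_le_tsum fun σ' => mul_le_mul_right (ih σ' τ) _
    · simp [mu, h]

theorem wpeApprox_zero (E : S → ℝ≥0∞) : wpeApprox G body E 0 = Phi G body E ⊥ := by
  funext σ
  by_cases h : G σ <;> simp [wpeApprox, mu, Phi, h]

theorem wpeApprox_succ (E : S → ℝ≥0∞) (n : ℕ) :
    wpeApprox G body E (n + 1) = Phi G body E (wpeApprox G body E n) := by
  funext σ
  by_cases h : G σ
  · simp only [wpeApprox, Phi, h, if_true, mu_succ_of_guard h]
    exact ENNReal.tsum_tsum_mul_mul_assoc _ _ _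
  · simp [wpeApprox, Phi, mu, h]

theorem wpeApprox_monotone (E : S → ℝ≥0∞) : Monotone (wpeApprox G body E) :=
  fun _ _ hmn σ => ENNReal.tsum_le_tsum fun τ => mul_le_mul_left (mu_monotone hmn σ τ) _

theorem wpe_eq_iSup_wpeApprox (E : S → ℝ≥0∞) :
    wpe G body E = ⨆ n, wpeApprox G body E n := by
  funext σ
  simp only [wpe, wpeApprox, W, ENNReal.iSup_mul, iSup_apply]
  exact ENNReal.tsum_iSup_of_monotone fun _ _ hmn τ => mul_le_mul_left (mu_monotone hmn σ τ) _

theorem Phi_wpe (E : S → ℝ≥0∞) : Phi G body E (wpe G body E) = wpe G body E := by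
  rw [wpe_eq_iSup_wpeApprox, Phi_iSup_of_monotone E (wpeApprox_monotone E)]
  simp_rw [← wpeApprox_succ]
  exact (wpeApprox_monotone E).iSup_nat_add 1

theorem wpe_le_of_Phi_le {E X : S → ℝ≥0∞} (hX : Phi G body E X ≤ X) : wpe G body E ≤ X := by
  rw [wpe_eq_iSup_wpeApprox]
  refine iSup_le fun n => ?_
  induction n with
  | zero => exact (wpeApprox_zero E).trans_le ((Phi_monotone G body E bot_le).trans hX)
  | succ n ih => exact (wpeApprox_succ E n).trans_le ((Phi_monotone G body E ih).trans hX)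

theorem lfp_PhiHom_eq_wpe (E : S → ℝ≥0∞) : OrderHom.lfp (PhiHom G body E) = wpe G body E :=
  le_antisymm (OrderHom.lfp_le _ (Phi_wpe E).le)
    (OrderHom.le_lfp _ fun _ hX => wpe_le_of_Phi_le hX)

theorem wlpe_eq_wpe (hAST : ∀ σ, ∑' τ, W G body σ τ = 1) (E : S → ℝ≥0∞) :
    wlpe G body E = wpe G body E := by
  funext σ
  simp [wlpe, wpe, hAST σ]

theorem wpe_one_sub (hAST : ∀ σ, ∑' τ, W G body σ τ = 1) {E : S → ℝ≥0∞} (hE : E ≤ 1) :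
    wpe G body (1 - E) = 1 - wpe G body E := by
  funext σ
  simp only [wpe, Pi.sub_apply, Pi.one_apply]
  rw [ENNReal.tsum_mul_one_sub (by simp [hAST σ]) hE, hAST σ]

theorem eq_lfp_of_Phi_eq (hAST : ∀ σ, ∑' τ, W G body σ τ = 1) {E I : S → ℝ≥0∞} (hE : E ≤ 1)
    (hI : I ≤ 1) (hfix : Phi G body E I = I) : I = OrderHom.lfp (PhiHom G body E) := by
  refine le_antisymm (fun σ => ?_) (OrderHom.lfp_le _ hfix.le)
  have hcompl : wpe G body (1 - E) ≤ 1 - I := wpe_le_of_Phi_le (Phi_one_sub hI hfix).le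
  rw [wpe_one_sub hAST hE] at hcompl
  rw [lfp_PhiHom_eq_wpe]
  exact (ENNReal.sub_le_sub_iff_left (hI σ) one_ne_top).1 (hcompl σ)

end Loop

theorem lfp_eq_wlpe_of_AST_general {S : Type*} [DecidableEq S]
    (G : S → Prop) [DecidablePred G] (body : S → PMF S)
    (hAST : ∀ σ : S, ∑' τ, W G body σ τ = 1)
    (E : S → ℝ≥0∞) (hE : ∀ σ, E σ ≤ 1) :
    OrderHom.lfp (PhiHom G body E) = wlpe G body E ∧
    ∀ I : S → ℝ≥0∞, (∀ σ, I σ ≤ 1) → I = Phi G body E I →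
      I = OrderHom.lfp (PhiHom G body E) :=
  ⟨(lfp_PhiHom_eq_wpe E).trans (wlpe_eq_wpe hAST E).symm,
    fun _ hI hfix => eq_lfp_of_Phi_eq hAST hE hI hfix.symm⟩

/-- for almost surely terminating loops, wpe and wlpe coincide on
post-expectations bounded by one; consequently every bounded exact invariant
equals the least fixed point. -/
theorem lfp_eq_wlpe_of_AST {S : Type*} [Countable S] [DecidableEq S]
    (G : S → Prop) [DecidablePred G] (body : S → PMF S)
    (hAST : ∀ σ : S, ∑' τ, W G body σ τ = 1)
    (E : S → ℝ≥0∞) (hE : ∀ σ, E σ ≤ 1) :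
    OrderHom.lfp (PhiHom G body E) = wlpe G body E ∧
    ∀ I : S → ℝ≥0∞, (∀ σ, I σ ≤ 1) → I = Phi G body E I →
      I = OrderHom.lfp (PhiHom G body E) :=
  lfp_eq_wlpe_of_AST_general G body hAST E hE
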